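/- (Unbiased on-policy AGRO gradient estimate) Let n ≥ 2 and suppose each map θ ↦ π_θ(y|x) is Fréchet differentiable at θ₀. Write π = π_{θ₀}, R(x,y) = R^π_β(x,y), s(x,y) = D_θ[log π_θ(y|x)](θ₀), and for (y₁,…,yₙ) ∈ Yⁿ let R̂₋ᵢ = (1/(n−1))·Σ_{j≠i} R(x,y_j). Then Σ_x ρ(x)·Σ_{(y₁,…,yₙ)∈Yⁿ} (Π_{i=1}^n π(y_i|x)) · [−(β/n)·Σ_{i=1}^n (R(x,y_i) − R̂₋ᵢ)·s(x,y_i) + (1/(2n))·Σ_{i=1}^n (R(x,y_i) − R̂₋ᵢ)²·s(x,y_i)] equals the Fréchet derivative at θ₀ of θ ↦ L(π_θ), where L(π_θ) = L_{π_θ}(π_θ). -/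

import Mathlib

open Finset

noncomputable section

/-- The regularized reward `R^π_β(x,y)`. -/
def Rreg {X Y : Type*} (πref r : X → Y → ℝ) (β : ℝ) (π : X → Y → ℝ) (x : X) (y : Y) : ℝ :=
  r x y - β * Real.log (π x y / πref x y)

/-- Off-policy loss `L_μ(π)`. The on-policy loss is `L(π) = L_π(π)`. -/
def Lmu {X Y : Type*} [Fintype X] [Fintype Y] (ρ : X → ℝ) (πref r : X → Y → ℝ) (β : ℝ)
    (μ π : X → Y → ℝ) : ℝ :=
  (1 / 2) * ∑ x, ρ x * ∑ y, μ x y *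
    (Rreg πref r β π x y - ∑ y', μ x y' * Rreg πref r β π x y') ^ 2

/-!
With the score `s = D log π`, one has `D π = π • s`, `D R = -β • s` and `E_π[s] = 0`. The on-policy
loss is `½ E_ρ Var_π(R)`; differentiating the variance, the derivative of the mean `m = E_π[R]`
drops out against `E_π[R - m] = 0`, leaving `E_π[(½ (R - m)² - β (R - m)) s]`.
For the estimator, the leave-one-out baseline `R̂₋ᵢ` is independent of `yᵢ` and has mean `m`, so
`E[(R(yᵢ) - R̂₋ᵢ) s(yᵢ)] = E_π[(R - m) s]`; for the square, the unknown second moment of `R̂₋ᵢ`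
only multiplies `E_π[s] = 0`, leaving `E_π[(R - m)² s]`. Averaging over the `n` indices gives
the same expression.
-/

section IIDSamples

variable {Y : Type*}

def sampleMean {m : ℕ} (R : Y → ℝ) (zs : Fin m → Y) : ℝ :=
  (m : ℝ)⁻¹ * ∑ j, R (zs j)

def looAdvantage {n : ℕ} (R : Y → ℝ) (ys : Fin n → Y) (i : Fin n) : ℝ :=
  R (ys i) - 1 / ((n : ℝ) - 1) * ∑ j ∈ univ.erase i, R (ys j)

theorem looAdvantage_eq_sub_sampleMean {m : ℕ} (R : Y → ℝ) (ys : Fin (m + 1) → Y)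
    (i : Fin (m + 1)) :
    looAdvantage R ys i = R (ys i) - sampleMean R (i.removeNth ys) := by
  rw [looAdvantage, sampleMean, Finset.sum_erase_eq_sub (mem_univ i),
    Fin.sum_univ_succAbove _ i, add_sub_cancel_left]
  push_cast
  simp [Fin.removeNth]

variable [Fintype Y]

theorem sum_pi_prod_smul_removeNth_smul {R E : Type*} [CommSemiring R] [AddCommMonoid E]
    [Module R E] {m : ℕ} (p : Y → R) (i : Fin (m + 1)) (g : (Fin m → Y) → R) (f : Y → E) :
    ∑ ys : Fin (m + 1) → Y, (∏ k, p (ys k)) • (g (i.removeNth ys) • f (ys i))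
      = (∑ zs : Fin m → Y, (∏ k, p (zs k)) * g zs) • ∑ y, p y • f y := by
  rw [← (Fin.insertNthEquiv (fun _ => Y) i).sum_comp, Fintype.sum_prod_type, Finset.sum_smul,
    Finset.sum_comm]
  simp only [Fin.insertNthEquiv, Equiv.coe_fn_mk, Fin.prod_univ_succAbove _ i,
    Fin.removeNth_insertNth, Fin.insertNth_apply_same, Fin.insertNth_apply_succAbove,
    Finset.smul_sum, smul_smul]
  refine Finset.sum_congr rfl fun zs _ => Finset.sum_congr rfl fun y _ => ?_
  congr 1
  ring

theorem sum_pi_prod_eq_one {R ι : Type*} [CommSemiring R] [Fintype ι] [DecidableEq ι]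
    {p : Y → R} (hp : ∑ y, p y = 1) :
    ∑ ys : ι → Y, ∏ k, p (ys k) = 1 := by
  rw [← Fintype.prod_sum (fun _ => p)]
  simp [hp]

theorem sum_pi_prod_smul_apply {R E : Type*} [CommSemiring R] [AddCommMonoid E] [Module R E]
    {m : ℕ} {p : Y → R} (hp : ∑ y, p y = 1) (i : Fin (m + 1)) (f : Y → E) :
    ∑ ys : Fin (m + 1) → Y, (∏ k, p (ys k)) • f (ys i) = ∑ y, p y • f y := by
  simpa [sum_pi_prod_eq_one hp] using sum_pi_prod_smul_removeNth_smul p i (fun _ => 1) f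

theorem sum_pi_prod_mul_sampleMean {m : ℕ} (hm : m ≠ 0) {p : Y → ℝ} (hp : ∑ y, p y = 1)
    (R : Y → ℝ) :
    ∑ zs : Fin m → Y, (∏ k, p (zs k)) * sampleMean R zs = ∑ y, p y * R y := by
  obtain ⟨m, rfl⟩ := Nat.exists_eq_succ_of_ne_zero hm
  have marginal (j : Fin (m + 1)) :
      ∑ zs : Fin (m + 1) → Y, (∏ k, p (zs k)) * R (zs j) = ∑ y, p y * R y :=
    sum_pi_prod_smul_apply hp j R
  simp only [sampleMean, Finset.mul_sum]
  rw [Finset.sum_comm]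
  simp_rw [mul_left_comm _ (_ : ℝ)⁻¹, ← Finset.mul_sum, marginal]
  simp only [sum_const, card_univ, Fintype.card_fin, nsmul_eq_mul]
  field_simp

theorem sum_pi_prod_smul_looAdvantage_smul {E : Type*} [AddCommGroup E] [Module ℝ E] {m : ℕ}
    (hm : m ≠ 0) {p : Y → ℝ} (hp : ∑ y, p y = 1) (R : Y → ℝ) (s : Y → E) (i : Fin (m + 1)) :
    ∑ ys : Fin (m + 1) → Y, (∏ k, p (ys k)) • (looAdvantage R ys i • s (ys i))
      = ∑ y, (p y * (R y - ∑ y', p y' * R y')) • s y := by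
  simp_rw [looAdvantage_eq_sub_sampleMean, sub_smul, smul_sub, Finset.sum_sub_distrib,
    sum_pi_prod_smul_apply hp i (fun y => R y • s y),
    sum_pi_prod_smul_removeNth_smul p i (sampleMean R), sum_pi_prod_mul_sampleMean hm hp,
    Finset.smul_sum, ← Finset.sum_sub_distrib]
  refine Finset.sum_congr rfl fun y _ => ?_
  module

theorem sum_pi_prod_smul_looAdvantage_sq_smul {E : Type*} [AddCommGroup E] [Module ℝ E]
    {m : ℕ} (hm : m ≠ 0) {p : Y → ℝ} (hp : ∑ y, p y = 1) (R : Y → ℝ) {s : Y → E}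
    (hs : ∑ y, p y • s y = 0) (i : Fin (m + 1)) :
    ∑ ys : Fin (m + 1) → Y, (∏ k, p (ys k)) • (looAdvantage R ys i ^ 2 • s (ys i))
      = ∑ y, (p y * (R y - ∑ y', p y' * R y') ^ 2) • s y := by
  have expand (ys : Fin (m + 1) → Y) : looAdvantage R ys i ^ 2 • s (ys i)
      = (R (ys i) ^ 2) • s (ys i) - sampleMean R (i.removeNth ys) • ((2 * R (ys i)) • s (ys i))
        + sampleMean R (i.removeNth ys) ^ 2 • s (ys i) := by
    rw [looAdvantage_eq_sub_sampleMean]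
    module
  have baseline_sq := sum_pi_prod_smul_removeNth_smul p i (fun zs => sampleMean R zs ^ 2) s
  have centered : ∑ y, (p y * (R y - ∑ y', p y' * R y') ^ 2) • s y
      = ∑ y, p y • (R y ^ 2 • s y) - (∑ y', p y' * R y') • ∑ y, p y • ((2 * R y) • s y)
        + (∑ y', p y' * R y') ^ 2 • ∑ y, p y • s y := by
    simp_rw [Finset.smul_sum, ← Finset.sum_sub_distrib, ← Finset.sum_add_distrib]
    refine Finset.sum_congr rfl fun y _ => ?_
    module
  simp_rw [expand, smul_add, smul_sub, Finset.sum_add_distrib, Finset.sum_sub_distrib,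
    sum_pi_prod_smul_apply hp i (fun y => R y ^ 2 • s y),
    sum_pi_prod_smul_removeNth_smul p i (sampleMean R) (fun y => (2 * R y) • s y),
    sum_pi_prod_mul_sampleMean hm hp, baseline_sq, centered, hs, smul_zero]

theorem sum_pi_prod_smul_agroEstimate {E : Type*} [AddCommGroup E] [Module ℝ E] {n : ℕ}
    (hn : 2 ≤ n) {p : Y → ℝ} (hp : ∑ y, p y = 1) (β : ℝ) (R : Y → ℝ) {s : Y → E}
    (hs : ∑ y, p y • s y = 0) :
    ∑ ys : Fin n → Y, (∏ i, p (ys i)) •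
        ((∑ i, (-(β / n) * looAdvantage R ys i) • s (ys i))
          + ∑ i, ((1 / (2 * n)) * looAdvantage R ys i ^ 2) • s (ys i))
      = -β • ∑ y, (p y * (R y - ∑ y', p y' * R y')) • s y
        + (1 / 2 : ℝ) • ∑ y, (p y * (R y - ∑ y', p y' * R y') ^ 2) • s y := by
  obtain ⟨m, rfl⟩ : ∃ m, n = m + 1 := ⟨n - 1, by omega⟩
  have hm : m ≠ 0 := by omega
  have swap (c : ℝ) (F : (Fin (m + 1) → Y) → Fin (m + 1) → ℝ) :
      ∑ ys : Fin (m + 1) → Y, (∏ i, p (ys i)) • ∑ i, (c * F ys i) • s (ys i)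
        = c • ∑ i, ∑ ys : Fin (m + 1) → Y, (∏ k, p (ys k)) • (F ys i • s (ys i)) := by
    simp_rw [Finset.smul_sum, mul_smul, smul_comm _ c]
    exact Finset.sum_comm
  simp only [smul_add, Finset.sum_add_distrib]
  rw [swap, swap _ fun ys i => looAdvantage R ys i ^ 2]
  simp_rw [sum_pi_prod_smul_looAdvantage_smul hm hp,
    sum_pi_prod_smul_looAdvantage_sq_smul hm hp R hs, Finset.sum_const, Finset.card_univ,
    Fintype.card_fin, ← Nat.cast_smul_eq_nsmul ℝ, smul_smul]
  congr 2 <;> field_simp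

end IIDSamples

theorem hasFDerivAt_variance {Θ Y : Type*} [NormedAddCommGroup Θ] [NormedSpace ℝ Θ] [Fintype Y]
    {p R : Θ → Y → ℝ} {p' R' : Y → Θ →L[ℝ] ℝ} {θ₀ : Θ} (hp : ∑ y, p θ₀ y = 1)
    (hp' : ∀ y, HasFDerivAt (fun θ => p θ y) (p' y) θ₀)
    (hR' : ∀ y, HasFDerivAt (fun θ => R θ y) (R' y) θ₀) :
    HasFDerivAt (fun θ => ∑ y, p θ y * (R θ y - ∑ y', p θ y' * R θ y') ^ 2)
      (∑ y, ((R θ₀ y - ∑ y', p θ₀ y' * R θ₀ y') ^ 2 • p' y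
        + (2 * p θ₀ y * (R θ₀ y - ∑ y', p θ₀ y' * R θ₀ y')) • R' y)) θ₀ := by
  set m := ∑ y', p θ₀ y' * R θ₀ y'
  have hmean := HasFDerivAt.fun_sum (u := univ) fun y _ => (hp' y).fun_mul (hR' y)
  have hcentered : ∑ y, p θ₀ y * (R θ₀ y - m) = 0 := by
    simp [mul_sub, Finset.sum_sub_distrib, ← Finset.sum_mul, hp, m]
  refine (HasFDerivAt.fun_sum (u := univ) fun y _ =>
    (hp' y).fun_mul (HasFDerivAt.pow ((hR' y).fun_sub hmean) 2)).congr_fderiv ?_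
  set M' := ∑ y, (p θ₀ y • R' y + R θ₀ y • p' y)
  calc _ = ∑ y, (((R θ₀ y - m) ^ 2 • p' y + (2 * p θ₀ y * (R θ₀ y - m)) • R' y)
          - (2 * (p θ₀ y * (R θ₀ y - m))) • M') :=
        Finset.sum_congr rfl fun y _ => by
          rw [two_nsmul, pow_one]
          module
    _ = _ := by rw [Finset.sum_sub_distrib, ← Finset.sum_smul, ← Finset.mul_sum, hcentered,
          mul_zero, zero_smul, sub_zero]

theorem hasFDerivAt_Rreg {X Y Θ : Type*} [NormedAddCommGroup Θ] [NormedSpace ℝ Θ]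
    (πref r : X → Y → ℝ) (β : ℝ) {π : Θ → X → Y → ℝ} {θ₀ : Θ} {x : X} {y : Y}
    {s : Θ →L[ℝ] ℝ} (href : πref x y ≠ 0) (hπ : ∀ θ, π θ x y ≠ 0)
    (hlog : HasFDerivAt (fun θ => Real.log (π θ x y)) s θ₀) :
    HasFDerivAt (fun θ => Rreg πref r β (π θ) x y) (-β • s) θ₀ := by
  have hRreg : (fun θ => Rreg πref r β (π θ) x y)
      = fun θ => (r x y + β * Real.log (πref x y)) + -β * Real.log (π θ x y) := by
    funext θ
    rw [Rreg, Real.log_div (hπ θ) href]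
    ring
  rw [hRreg]
  exact (hlog.const_mul (-β)).const_add _

theorem hasFDerivAt_Lmu_self {X Y Θ : Type*} [Fintype X] [Fintype Y] [NormedAddCommGroup Θ]
    [NormedSpace ℝ Θ] (ρ : X → ℝ) (πref r : X → Y → ℝ) (β : ℝ) {π : Θ → X → Y → ℝ} {θ₀ : Θ}
    (hsum : ∀ x, ∑ y, π θ₀ x y = 1) {s : X → Y → Θ →L[ℝ] ℝ}
    (hπ : ∀ x y, HasFDerivAt (fun θ => π θ x y) (π θ₀ x y • s x y) θ₀)
    (hR : ∀ x y, HasFDerivAt (fun θ => Rreg πref r β (π θ) x y) (-β • s x y) θ₀) :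
    HasFDerivAt (fun θ => Lmu ρ πref r β (π θ) (π θ))
      (∑ x, ρ x •
        (-β • ∑ y, (π θ₀ x y * (Rreg πref r β (π θ₀) x y
            - ∑ y', π θ₀ x y' * Rreg πref r β (π θ₀) x y')) • s x y
          + (1 / 2 : ℝ) • ∑ y, (π θ₀ x y * (Rreg πref r β (π θ₀) x y
            - ∑ y', π θ₀ x y' * Rreg πref r β (π θ₀) x y') ^ 2) • s x y)) θ₀ := by
  unfold Lmu
  refine ((HasFDerivAt.fun_sum (u := univ) fun x _ =>
    (hasFDerivAt_variance (p := fun θ => π θ x)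
      (R := fun θ => Rreg πref r β (π θ) x) (hsum x) (hπ x) (hR x)).const_mul (ρ x)).const_mul
      (1 / 2 : ℝ)).congr_fderiv ?_
  simp only [Finset.smul_sum, ← Finset.sum_add_distrib]
  refine Finset.sum_congr rfl fun x _ => Finset.sum_congr rfl fun y _ => ?_
  module

theorem on_policy_AGRO_estimate_unbiased_general
    {X Y : Type*} [Fintype X] [Fintype Y]
    {Θ : Type*} [NormedAddCommGroup Θ] [NormedSpace ℝ Θ]
    (πref : X → Y → ℝ) (href_pos : ∀ x y, 0 < πref x y)
    (r : X → Y → ℝ) (β : ℝ)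
    (ρ : X → ℝ)
    (n : ℕ) (hn : 2 ≤ n)
    (π : Θ → X → Y → ℝ) (hpos : ∀ θ x y, 0 < π θ x y) (hsum : ∀ θ x, ∑ y, π θ x y = 1)
    (θ₀ : Θ) (hdiff : ∀ x y, DifferentiableAt ℝ (fun θ => π θ x y) θ₀) :
    (∑ x, ∑ ys : Fin n → Y,
      (ρ x * ∏ i, π θ₀ x (ys i)) •
        ((∑ i : Fin n,
          (-(β / (n : ℝ)) *
            (Rreg πref r β (π θ₀) x (ys i)
              - (1 / ((n : ℝ) - 1)) *
                  ∑ j ∈ Finset.univ.erase i, Rreg πref r β (π θ₀) x (ys j))) •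
            fderiv ℝ (fun θ => Real.log (π θ x (ys i))) θ₀)
        + (∑ i : Fin n,
          ((1 / (2 * (n : ℝ))) *
            (Rreg πref r β (π θ₀) x (ys i)
              - (1 / ((n : ℝ) - 1)) *
                  ∑ j ∈ Finset.univ.erase i, Rreg πref r β (π θ₀) x (ys j)) ^ 2) •
            fderiv ℝ (fun θ => Real.log (π θ x (ys i))) θ₀)))
      = fderiv ℝ (fun θ => Lmu ρ πref r β (π θ) (π θ)) θ₀ := by
  set s := fun x y => fderiv ℝ (fun θ => Real.log (π θ x y)) θ₀
  have hlog (x : X) (y : Y) : HasFDerivAt (fun θ => Real.log (π θ x y)) (s x y) θ₀ :=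
    ((hdiff x y).log (hpos θ₀ x y).ne').hasFDerivAt
  have hπ (x : X) (y : Y) : HasFDerivAt (fun θ => π θ x y) (π θ₀ x y • s x y) θ₀ := by
    simpa only [Real.exp_log (hpos _ x y)] using (hlog x y).exp
  have hR (x : X) (y : Y) : HasFDerivAt (fun θ => Rreg πref r β (π θ) x y) (-β • s x y) θ₀ :=
    hasFDerivAt_Rreg πref r β (href_pos x y).ne' (fun θ => (hpos θ x y).ne') (hlog x y)
  have hscore (x : X) : ∑ y, π θ₀ x y • s x y = 0 := by
    have hconst := HasFDerivAt.fun_sum (u := univ) fun y _ => hπ x y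
    simp only [hsum _ x] at hconst
    exact hconst.unique (hasFDerivAt_const 1 θ₀)
  rw [(hasFDerivAt_Lmu_self ρ πref r β (fun x => hsum θ₀ x) hπ hR).fderiv]
  refine Finset.sum_congr rfl fun x _ => ?_
  rw [← sum_pi_prod_smul_agroEstimate hn (hsum θ₀ x) β _ (hscore x), Finset.smul_sum]
  exact Finset.sum_congr rfl fun ys _ => mul_smul _ _ _

/-- the on-policy AGRO `n`-sample gradient estimate (pathwise-derivative
term plus likelihood-ratio term, with leave-one-out baselines) is an unbiased estimate of
the gradient of the on-policy loss `θ ↦ L(π_θ) = L_{π_θ}(π_θ)`. -/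
theorem on_policy_AGRO_estimate_unbiased
    {X Y : Type*} [Fintype X] [Fintype Y] [Nonempty X] [Nonempty Y]
    {Θ : Type*} [NormedAddCommGroup Θ] [NormedSpace ℝ Θ]
    (πref : X → Y → ℝ) (href_pos : ∀ x y, 0 < πref x y)
    (href_sum : ∀ x, ∑ y, πref x y = 1)
    (r : X → Y → ℝ) (β : ℝ) (hβ : 0 < β)
    (ρ : X → ℝ) (hρ_nonneg : ∀ x, 0 ≤ ρ x) (hρ_sum : ∑ x, ρ x = 1)
    (n : ℕ) (hn : 2 ≤ n)
    (π : Θ → X → Y → ℝ) (hpos : ∀ θ x y, 0 < π θ x y) (hsum : ∀ θ x, ∑ y, π θ x y = 1)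
    (θ₀ : Θ) (hdiff : ∀ x y, DifferentiableAt ℝ (fun θ => π θ x y) θ₀) :
    (∑ x, ∑ ys : Fin n → Y,
      (ρ x * ∏ i, π θ₀ x (ys i)) •
        ((∑ i : Fin n,
          (-(β / (n : ℝ)) *
            (Rreg πref r β (π θ₀) x (ys i)
              - (1 / ((n : ℝ) - 1)) *
                  ∑ j ∈ Finset.univ.erase i, Rreg πref r β (π θ₀) x (ys j))) •
            fderiv ℝ (fun θ => Real.log (π θ x (ys i))) θ₀)
        + (∑ i : Fin n,
          ((1 / (2 * (n : ℝ))) *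
            (Rreg πref r β (π θ₀) x (ys i)
              - (1 / ((n : ℝ) - 1)) *
                  ∑ j ∈ Finset.univ.erase i, Rreg πref r β (π θ₀) x (ys j)) ^ 2) •
            fderiv ℝ (fun θ => Real.log (π θ x (ys i))) θ₀)))
      = fderiv ℝ (fun θ => Lmu ρ πref r β (π θ) (π θ)) θ₀ :=
  on_policy_AGRO_estimate_unbiased_general πref href_pos r β ρ n hn π hpos hsum θ₀ hdiff
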